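/- Let P be an orthogonal polygon and S a maximal square of side length d whose top and bottom sides overlap with horizontal polygon edges e₁ and e₂, with e₁ containing the top-right corner of S and e₂ containing the bottom-right corner of S. Suppose the axis-parallel d × d square S′ obtained by reflecting S about its right side lies entirely inside P. If 𝓡 is a partial solution containing S and no rec-pack of 𝓡 overlaps S′, then 𝓡 ∪ {S′} is also a partial solution. -/

import Mathlib

open Set

/-- A block: the unit lattice square with the given bottom-left lattice corner. -/
abbrev Blk := ℤ × ℤ

/-- An axis-parallel lattice square: bottom-left corner block and side length. -/
abbrev SqZ := Blk × ℕ

/-- The set of blocks covered by the square `s`. -/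
def SqZ.blk (s : SqZ) : Set Blk :=
  {p | s.1.1 ≤ p.1 ∧ p.1 < s.1.1 + (s.2 : ℤ) ∧ s.1.2 ≤ p.2 ∧ p.2 < s.1.2 + (s.2 : ℤ)}

/-- A rec-pack: corner block, width `t`, strength `η`, and orientation. -/
abbrev RPk := Blk × ℕ × ℕ × Bool

def RPk.t (R : RPk) : ℕ := R.2.1
def RPk.str (R : RPk) : ℕ := R.2.2.1

/-- The extraction of a rec-pack: its `η` side-by-side `t × t` squares. -/
def RPk.ext (R : RPk) : Finset SqZ :=
  (Finset.range (RPk.str R)).image fun i : ℕ =>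
    (if R.2.2.2 then (R.1.1 + (i : ℤ) * (RPk.t R : ℤ), R.1.2)
     else (R.1.1, R.1.2 + (i : ℤ) * (RPk.t R : ℤ)), RPk.t R)

/-- The extraction of a set of rec-packs. -/
def extSet (𝓡 : Finset RPk) : Finset SqZ := 𝓡.biUnion RPk.ext

/-- The set of blocks covered by a finite set of squares. -/
def coveredBy (F : Finset SqZ) : Set Blk := ⋃ s ∈ F, SqZ.blk s

/-- A valid square: nondegenerate and contained in `P`. -/
def ValidSq (P : Set Blk) (s : SqZ) : Prop := 0 < s.2 ∧ SqZ.blk s ⊆ P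

def IsCovering (P : Set Blk) (F : Finset SqZ) : Prop :=
  (∀ s ∈ F, ValidSq P s) ∧ coveredBy F = P

def IsMinCovering (P : Set Blk) (F : Finset SqZ) : Prop :=
  IsCovering P F ∧ ∀ F' : Finset SqZ, IsCovering P F' → F.card ≤ F'.card

/-- A set of rec-packs is a minimum covering of `P` if its extraction is a minimum
square covering of `P` and the extractions are pairwise disjoint. -/
def IsMinRPCovering (P : Set Blk) (𝓡 : Finset RPk) : Prop :=
  IsMinCovering P (extSet 𝓡) ∧
    ∀ R1 ∈ 𝓡, ∀ R2 ∈ 𝓡, R1 ≠ R2 → RPk.ext R1 ∩ RPk.ext R2 = ∅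

/-- A partial solution: a set of rec-packs extendable to a minimum covering of `P`. -/
def PartialSol (P : Set Blk) (𝓡 : Finset RPk) : Prop :=
  ∃ 𝓡' : Finset RPk, 𝓡 ⊆ 𝓡' ∧ IsMinRPCovering P 𝓡'

/-- The blocks covered by the rec-packs of `𝓡`. -/
def rpCovered (𝓡 : Finset RPk) : Set Blk := coveredBy (extSet 𝓡)

/-- Adjacency in `G^𝓡(P)`: two distinct uncovered blocks coverable by one valid square. -/
def AdjR (P : Set Blk) (𝓡 : Finset RPk) (p q : Blk) : Prop :=
  p ≠ q ∧ p ∈ P \ rpCovered 𝓡 ∧ q ∈ P \ rpCovered 𝓡 ∧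
    ∃ s : SqZ, ValidSq P s ∧ p ∈ SqZ.blk s ∧ q ∈ SqZ.blk s

/-- A simplicial node of `G^𝓡(P)`: its closed neighbourhood induces a clique. -/
def SimplicialBlk (P : Set Blk) (𝓡 : Finset RPk) (p : Blk) : Prop :=
  p ∈ P \ rpCovered 𝓡 ∧
    ∀ q r : Blk, AdjR P 𝓡 p q → AdjR P 𝓡 p r → q ≠ r → AdjR P 𝓡 q r

/-- A maximal square: a valid square not contained in any strictly larger valid square. -/
def MaximalSqZ (P : Set Blk) (s : SqZ) : Prop :=
  ValidSq P s ∧ ¬ ∃ s' : SqZ, s.2 < s'.2 ∧ ValidSq P s' ∧ SqZ.blk s ⊆ SqZ.blk s'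

/-- `S` is an unambiguous square given a partial solution `𝓡`: a maximal square
covering some simplicial node `p` of `G^𝓡(P)` together with all of its neighbours. -/
def Unambiguous (P : Set Blk) (𝓡 : Finset RPk) (S : SqZ) : Prop :=
  MaximalSqZ P S ∧ ∃ p : Blk, SimplicialBlk P 𝓡 p ∧ p ∈ SqZ.blk S ∧
    ∀ q : Blk, AdjR P 𝓡 p q → q ∈ SqZ.blk S

/-- A square viewed as a trivial rec-pack (strength 1). -/
def toRP (s : SqZ) : RPk := (s.1, s.2, 1, true)

/-- Rook adjacency of blocks. -/
def adj4 (p q : Blk) : Prop := (p.1 - q.1).natAbs + (p.2 - q.2).natAbs = 1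

/-- A set of blocks is connected (under rook adjacency). -/
def ConnSet (A : Set Blk) : Prop :=
  ∀ p ∈ A, ∀ q ∈ A, Relation.ReflTransGen (fun a b => adj4 a b ∧ a ∈ A ∧ b ∈ A) p q

/-!
In a minimum square covering that extends `𝓡`, the block at the bottom-left corner of `S′` lies
in some square `s`. Since the edges `e₁` and `e₂` pass directly above and below that block, `s`
fits between them, has side at most `d`, and hence lies in `S ∪ S′`. As `S` is kept, replacing
`s` by `S′` gives another minimum covering, and it contains the extraction of `𝓡 ∪ {S′}`
(no square of `𝓡` can be `s` or `S′`, as both meet `S′`). The squares not extracted from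
`𝓡 ∪ {S′}` are then added as rec-packs of strength one.
-/

lemma coveredBy_insert (t : SqZ) (F : Finset SqZ) :
    coveredBy (insert t F) = SqZ.blk t ∪ coveredBy F :=
  Finset.set_biUnion_insert t F SqZ.blk

lemma blk_subset_coveredBy {F : Finset SqZ} {s : SqZ} (hs : s ∈ F) :
    SqZ.blk s ⊆ coveredBy F :=
  Set.subset_biUnion_of_mem (u := SqZ.blk) (Finset.mem_coe.mpr hs)

lemma coveredBy_mono {F G : Finset SqZ} (h : F ⊆ G) : coveredBy F ⊆ coveredBy G :=
  Set.biUnion_mono (Finset.coe_subset.mpr h) fun _ _ => subset_rfl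

namespace IsCovering

variable {P : Set Blk} {F : Finset SqZ} {s t : SqZ}

lemma exchange (hF : IsCovering P F) (hs : s ∈ F) (ht : ValidSq P t)
    (hst : SqZ.blk s ⊆ SqZ.blk t ∪ coveredBy (F.erase s)) :
    IsCovering P (insert t (F.erase s)) := by
  refine ⟨fun u hu => (Finset.mem_insert.mp hu).elim (· ▸ ht)
    fun hu => hF.1 u (Finset.mem_of_mem_erase hu), ?_⟩
  rw [coveredBy_insert]
  apply subset_antisymm
  · exact Set.union_subset ht.2 (hF.2 ▸ coveredBy_mono (Finset.erase_subset s F))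
  · rw [← hF.2, ← Finset.insert_erase hs, coveredBy_insert, Finset.erase_insert_eq_erase,
      Finset.erase_idem]
    exact Set.union_subset hst Set.subset_union_right

end IsCovering

lemma IsMinCovering.exchange {P : Set Blk} {F : Finset SqZ} {s t : SqZ}
    (hF : IsMinCovering P F) (hs : s ∈ F) (ht : ValidSq P t)
    (hst : SqZ.blk s ⊆ SqZ.blk t ∪ coveredBy (F.erase s)) :
    IsMinCovering P (insert t (F.erase s)) := by
  refine ⟨hF.1.exchange hs ht hst, fun F' hF' => le_trans ?_ (hF.2 F' hF')⟩
  calc (insert t (F.erase s)).card ≤ (F.erase s).card + 1 := Finset.card_insert_le _ _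
    _ = F.card := Finset.card_erase_add_one hs

lemma RPk.ext_toRP (s : SqZ) : RPk.ext (toRP s) = {s} := by
  simp [RPk.ext, toRP, RPk.t, RPk.str]

lemma mem_extSet {𝓡 : Finset RPk} {s : SqZ} :
    s ∈ extSet 𝓡 ↔ ∃ R ∈ 𝓡, s ∈ RPk.ext R :=
  Finset.mem_biUnion

lemma extSet_mono {𝓡 𝓢 : Finset RPk} (h : 𝓡 ⊆ 𝓢) : extSet 𝓡 ⊆ extSet 𝓢 :=
  Finset.biUnion_subset_biUnion_of_subset_left _ h

lemma extSet_insert (R : RPk) (𝓡 : Finset RPk) :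
    extSet (insert R 𝓡) = RPk.ext R ∪ extSet 𝓡 :=
  Finset.biUnion_insert

lemma extSet_union (𝓡 𝓢 : Finset RPk) :
    extSet (𝓡 ∪ 𝓢) = extSet 𝓡 ∪ extSet 𝓢 :=
  Finset.union_biUnion

lemma extSet_image_toRP (F : Finset SqZ) : extSet (F.image toRP) = F := by
  simp only [extSet, Finset.image_biUnion, RPk.ext_toRP, Finset.biUnion_singleton_eq_self]

lemma isMinRPCovering_iff {P : Set Blk} {𝓡 : Finset RPk} :
    IsMinRPCovering P 𝓡 ↔
      IsMinCovering P (extSet 𝓡) ∧ (𝓡 : Set RPk).PairwiseDisjoint RPk.ext := by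
  simp only [IsMinRPCovering, Set.PairwiseDisjoint, Set.Pairwise, Finset.mem_coe,
    Function.onFun, Finset.disjoint_iff_inter_eq_empty]

lemma pairwiseDisjoint_image_toRP (F : Finset SqZ) :
    ((F.image toRP : Finset RPk) : Set RPk).PairwiseDisjoint RPk.ext := by
  rintro _ hR _ hR' hne
  obtain ⟨s, -, rfl⟩ := Finset.mem_image.mp hR
  obtain ⟨t, -, rfl⟩ := Finset.mem_image.mp hR'
  rw [Function.onFun, RPk.ext_toRP, RPk.ext_toRP, Finset.disjoint_singleton]
  exact fun h => hne (congrArg toRP h)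

/-- `𝓡` is completed by the remaining squares of `F`, as rec-packs of strength one. -/
lemma PartialSol.of_extSet_subset {P : Set Blk} {F : Finset SqZ}
    {𝓡 : Finset RPk} (hF : IsMinCovering P F) (hdisj : (𝓡 : Set RPk).PairwiseDisjoint RPk.ext)
    (hsub : extSet 𝓡 ⊆ F) : PartialSol P 𝓡 := by
  refine ⟨𝓡 ∪ (F \ extSet 𝓡).image toRP, Finset.subset_union_left,
    isMinRPCovering_iff.mpr ⟨?_, ?_⟩⟩
  · rwa [extSet_union, extSet_image_toRP, Finset.union_sdiff_of_subset hsub]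
  · rw [Finset.coe_union, Set.pairwiseDisjoint_union]
    refine ⟨hdisj, pairwiseDisjoint_image_toRP _, fun R hR _ hR' _ => ?_⟩
    obtain ⟨s, hs, rfl⟩ := Finset.mem_image.mp hR'
    rw [RPk.ext_toRP, Finset.disjoint_singleton_right]
    exact fun hsR => (Finset.mem_sdiff.mp hs).2 (mem_extSet.mpr ⟨R, hR, hsR⟩)

lemma blk_subset_union_of_walls {P : Set Blk} {s : SqZ} (hs : SqZ.blk s ⊆ P) (c : Blk) (d : ℕ)
    (hp : (c.1 + (d : ℤ), c.2) ∈ SqZ.blk s)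
    (hbot : (c.1 + (d : ℤ), c.2 - 1) ∉ P) (htop : (c.1 + (d : ℤ), c.2 + (d : ℤ)) ∉ P) :
    SqZ.blk s ⊆ SqZ.blk (c, d) ∪ SqZ.blk ((c.1 + (d : ℤ), c.2), d) := by
  simp only [SqZ.blk, Set.mem_ofPred_eq] at hp
  have hlow : c.2 ≤ s.1.2 := by
    by_contra h
    exact hbot (hs (by simp only [SqZ.blk, Set.mem_ofPred_eq]; omega))
  have hside : (s.2 : ℤ) ≤ d := by
    by_contra h
    exact htop (hs (by simp only [SqZ.blk, Set.mem_ofPred_eq]; omega))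
  intro q hq
  simp only [SqZ.blk, Set.mem_union, Set.mem_ofPred_eq] at hq ⊢
  omega

lemma notMem_extSet_of_mem_blk {𝓡 : Finset RPk} {S' t : SqZ}
    (hdisj : ∀ R ∈ 𝓡, ∀ s ∈ RPk.ext R, SqZ.blk s ∩ SqZ.blk S' = ∅)
    {q : Blk} (hqt : q ∈ SqZ.blk t) (hqS' : q ∈ SqZ.blk S') : t ∉ extSet 𝓡 := fun ht => by
  obtain ⟨R, hR, htR⟩ := mem_extSet.mp ht
  exact (Set.eq_empty_iff_forall_notMem.mp (hdisj R hR t htR)) q ⟨hqt, hqS'⟩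

theorem reflected_square_extends_partial_solution_general (P : Set Blk)
    (c : Blk) (d : ℕ) (hd : 0 < d)
    (a b : ℤ) (ha : a < c.1 + (d : ℤ)) (hb : c.1 + 2 * (d : ℤ) < b)
    (htop : ∀ x : ℤ, a ≤ x → x < b → (x, c.2 + (d : ℤ)) ∉ P)
    (hbot : ∀ x : ℤ, a ≤ x → x < b → (x, c.2 - 1) ∉ P)
    (𝓡 : Finset RPk) (hPS : PartialSol P 𝓡) (hSin : toRP (c, d) ∈ 𝓡)
    (hS' : SqZ.blk ((c.1 + (d : ℤ), c.2), d) ⊆ P)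
    (hdisj : ∀ R ∈ 𝓡, ∀ s ∈ RPk.ext R,
      SqZ.blk s ∩ SqZ.blk ((c.1 + (d : ℤ), c.2), d) = ∅) :
    PartialSol P (insert (toRP ((c.1 + (d : ℤ), c.2), d)) 𝓡) := by
  obtain ⟨𝓡', hsub, hmin⟩ := hPS
  obtain ⟨hF, hdisj'⟩ := isMinRPCovering_iff.mp hmin
  set S' : SqZ := ((c.1 + (d : ℤ), c.2), d)
  have hp : (c.1 + (d : ℤ), c.2) ∈ SqZ.blk S' := by
    simp only [S', SqZ.blk, Set.mem_ofPred_eq]; omega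
  obtain ⟨s, hsF, hps⟩ := Set.mem_iUnion₂.mp (hF.1.2.symm.subset (hS' hp))
  have hS_mem : ((c, d) : SqZ) ∈ (extSet 𝓡').erase s := by
    refine Finset.mem_erase.mpr ⟨fun h => ?_, extSet_mono hsub
      (mem_extSet.mpr ⟨_, hSin, by simp [RPk.ext_toRP]⟩)⟩
    simp only [← h, SqZ.blk, Set.mem_ofPred_eq] at hps
    omega
  have hs_sub := blk_subset_union_of_walls (hF.1.1 s hsF).2 c d hps
    (hbot _ ha.le (by omega)) (htop _ ha.le (by omega))
  have hF' := hF.exchange hsF ⟨hd, hS'⟩ (hs_sub.trans (Set.union_subset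
    ((blk_subset_coveredBy hS_mem).trans Set.subset_union_right) Set.subset_union_left))
  refine PartialSol.of_extSet_subset hF' ?_ ?_
  · rw [Finset.coe_insert]
    refine (hdisj'.subset (Finset.coe_subset.mpr hsub)).insert fun R hR _ => ?_
    rw [RPk.ext_toRP, Finset.disjoint_singleton_left]
    exact fun h => notMem_extSet_of_mem_blk hdisj hp hp (mem_extSet.mpr ⟨R, hR, h⟩)
  · rw [extSet_insert, RPk.ext_toRP, ← Finset.insert_eq]
    exact Finset.insert_subset_insert _ (Finset.subset_erase.mpr
      ⟨extSet_mono hsub, notMem_extSet_of_mem_blk hdisj hps hp⟩)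

/-- Let `S` be the maximal square with bottom-left corner block `c` and side `d` in an
orthogonal polygon `P` without holes, whose top and bottom sides overlap with
horizontal polygon edges `e₁` and `e₂` (the rows of blocks just above and just below
`S` are outside `P` over the interval `[a, b)`), with `e₁` containing the top-right
corner of `S` and `e₂` the bottom-right corner (`a < c.1 + d`), and with the strip
between `e₁` and `e₂` extending more than `d` to the right of `S`
(`c.1 + 2d < b` and `hstrip`).  Let `S′` be the reflection of `S` about its right
side, lying inside `P`.  If `𝓡` is a partial solution containing `S` and no
rec-pack of `𝓡` overlaps `S′`, then `𝓡 ∪ {S′}` is also a partial solution. -/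
theorem reflected_square_extends_partial_solution (P : Set Blk)
    (hfin : P.Finite) (hne : P.Nonempty) (hconn : ConnSet P) (hnohole : ConnSet Pᶜ)
    (c : Blk) (d : ℕ) (hd : 0 < d)
    (hmax : MaximalSqZ P (c, d))
    (a b : ℤ) (ha : a < c.1 + (d : ℤ)) (hb : c.1 + 2 * (d : ℤ) < b)
    (htop : ∀ x : ℤ, a ≤ x → x < b → (x, c.2 + (d : ℤ)) ∉ P)
    (hbot : ∀ x : ℤ, a ≤ x → x < b → (x, c.2 - 1) ∉ P)
    (hstrip : ∀ x y : ℤ, c.1 + (d : ℤ) ≤ x → x < b → c.2 ≤ y → y < c.2 + (d : ℤ) →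
      (x, y) ∈ P)
    (𝓡 : Finset RPk) (hPS : PartialSol P 𝓡) (hSin : toRP (c, d) ∈ 𝓡)
    (hS' : SqZ.blk ((c.1 + (d : ℤ), c.2), d) ⊆ P)
    (hdisj : ∀ R ∈ 𝓡, ∀ s ∈ RPk.ext R,
      SqZ.blk s ∩ SqZ.blk ((c.1 + (d : ℤ), c.2), d) = ∅) :
    PartialSol P (insert (toRP ((c.1 + (d : ℤ), c.2), d)) 𝓡) :=
  reflected_square_extends_partial_solution_general P c d hd a b ha hb htop hbot 𝓡 hPS hSin hS'
    hdisj
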